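/- Let H be a self-adjoint operator bounded below with spectrum σ(H), and W ≥ 0 a nonnegative bounded self-adjoint operator such that ⟨Wψ, Wψ⟩ ≤ κ ⟨ψ, Wψ⟩ for a normalized ground state ψ of H with Hψ = E₀ψ, where E₀ = inf σ(H). Assume E₁(H) - E₀ ≥ δ > 0 and κ ≤ δ/2. Then E₀(H + W) ≥ E₀ + (1/2)⟨ψ, Wψ⟩. -/

import Mathlib

/-!
Write `φ = a • ψ + u` with `u ⊥ ψ`. The min-max gap gives `⟪u, H u⟫ ≥ (E₀ + δ) ‖u‖²`, since in
`span {ψ, u}` there is a unit vector orthogonal to any prescribed `v`. Cauchy–Schwarz for the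
positive form of `W`, together with `‖W ψ‖² ≤ κ ⟪ψ, W ψ⟫`, controls the cross term `2 a ⟪u, W ψ⟫`,
and `κ ≤ δ / 2` lets the gap absorb it: `⟪φ, (H + W) φ⟫ ≥ (E₀ + ⟪ψ, W ψ⟫ / 2) ‖φ‖²`. Such a form
bound bounds the spectrum from below, and the spectrum of a self-adjoint operator is nonempty
because its spectral radius is its norm.
-/

open scoped InnerProductSpace

/-- The second min-max (Courant–Fischer) value of a bounded self-adjoint operator. -/
noncomputable def secondMinMax {E : Type*} [NormedAddCommGroup E] [InnerProductSpace ℝ E]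
    (H : E →L[ℝ] E) : ℝ :=
  ⨆ v : E, ⨅ ψ : {ψ : E // ‖ψ‖ = 1 ∧ ⟪ψ, v⟫_ℝ = 0}, ⟪(ψ : E), H ψ⟫_ℝ

lemma exists_sq_add_sq_eq_one_and_mul_add_mul_eq_zero (p q : ℝ) :
    ∃ a b : ℝ, a ^ 2 + b ^ 2 = 1 ∧ a * p + b * q = 0 := by
  rcases eq_or_ne (p ^ 2 + q ^ 2) 0 with h | h
  · refine ⟨1, 0, by norm_num, ?_⟩
    nlinarith [sq_nonneg p, sq_nonneg q]
  · have hr : 0 < p ^ 2 + q ^ 2 := lt_of_le_of_ne (by positivity) h.symm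
    refine ⟨q / √(p ^ 2 + q ^ 2), -p / √(p ^ 2 + q ^ 2), ?_, by ring⟩
    rw [div_pow, div_pow, Real.sq_sqrt hr.le]
    field_simp
    ring

lemma temple_quadratic_bound {w κ δ a c q t : ℝ} (hw : 0 ≤ w) (hq : 0 ≤ q) (ht : 0 ≤ t)
    (hδ : 0 ≤ δ) (hcq : c ^ 2 ≤ q * w) (hct : c ^ 2 ≤ t * (κ * w)) (hwκ : w ^ 2 ≤ κ * w)
    (hκδ : κ ≤ δ / 2) :
    w / 2 * (a ^ 2 + t) ≤ a ^ 2 * w + 2 * a * c + q + δ * t := by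
  rcases hw.eq_or_lt with rfl | hw
  · obtain rfl : c = 0 :=
      pow_eq_zero_iff two_ne_zero |>.mp <| le_antisymm (by simpa using hcq) (sq_nonneg c)
    nlinarith [mul_nonneg hδ ht]
  · have hwκ : w ≤ κ := le_of_mul_le_mul_right (by nlinarith) hw
    -- after multiplying by `w`, complete the square in `w * a + 2 * c` and absorb `2 * c ^ 2`
    refine le_of_mul_le_mul_left ?_ hw
    nlinarith [sq_nonneg (w * a + 2 * c), mul_nonneg (mul_nonneg ht hw.le)
      (show 0 ≤ δ - κ - w / 2 by linarith)]

section InnerProductSpace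

variable {E : Type*} [NormedAddCommGroup E] [InnerProductSpace ℝ E]

lemma inner_map_self_smul_add {A : E →L[ℝ] E} (hA : (A : E →ₗ[ℝ] E).IsSymmetric)
    (a : ℝ) (x y : E) :
    ⟪a • x + y, A (a • x + y)⟫_ℝ = a ^ 2 * ⟪x, A x⟫_ℝ + 2 * a * ⟪y, A x⟫_ℝ + ⟪y, A y⟫_ℝ := by
  have hxy : ⟪x, A y⟫_ℝ = ⟪y, A x⟫_ℝ := by
    rw [real_inner_comm (A x) y]; exact (hA x y).symm
  simp only [map_add, map_smul, inner_add_left, inner_add_right, real_inner_smul_left,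
    real_inner_smul_right, hxy]
  ring

lemma norm_smul_add_sq {x y : E} (hx : ‖x‖ = 1) (hxy : ⟪x, y⟫_ℝ = 0) (a : ℝ) :
    ‖a • x + y‖ ^ 2 = a ^ 2 + ‖y‖ ^ 2 := by
  have h := norm_add_sq_eq_norm_sq_add_norm_sq_real
    (by rw [real_inner_smul_left, hxy, mul_zero] : ⟪a • x, y⟫_ℝ = 0)
  rw [norm_smul, hx, Real.norm_eq_abs] at h
  nlinarith [sq_abs a]

lemma inner_map_sq_le_of_nonneg {W : E →L[ℝ] E} (hW : (W : E →ₗ[ℝ] E).IsSymmetric)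
    (hWpos : ∀ v, 0 ≤ ⟪v, W v⟫_ℝ) (x y : E) :
    ⟪x, W y⟫_ℝ ^ 2 ≤ ⟪x, W x⟫_ℝ * ⟪y, W y⟫_ℝ := by
  have hquad : ∀ s : ℝ, 0 ≤ ⟪y, W y⟫_ℝ * (s * s) + 2 * ⟪x, W y⟫_ℝ * s + ⟪x, W x⟫_ℝ := by
    intro s
    have := hWpos (s • y + x)
    rw [inner_map_self_smul_add hW] at this
    linarith
  have := discrim_le_zero hquad
  rw [discrim] at this
  linarith

lemma neg_norm_le_inner_map_self (A : E →L[ℝ] E) {x : E} (hx : ‖x‖ = 1) :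
    -‖A‖ ≤ ⟪x, A x⟫_ℝ := by
  have := (abs_le.mp (A.rayleighQuotient_le_norm x)).1
  simpa [ContinuousLinearMap.rayleighQuotient, ContinuousLinearMap.reApplyInnerSelf_apply, hx,
    real_inner_comm] using this

lemma inner_map_self_inv_norm_smul (A : E →L[ℝ] E) (x : E) :
    ⟪‖x‖⁻¹ • x, A (‖x‖⁻¹ • x)⟫_ℝ = ⟪x, A x⟫_ℝ / ‖x‖ ^ 2 := by
  rw [map_smul, real_inner_smul_left, real_inner_smul_right]
  field_simp

lemma secondMinMax_le_max {A : E →L[ℝ] E} (hA : (A : E →ₗ[ℝ] E).IsSymmetric) {x y : E}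
    (hx : ‖x‖ = 1) (hy : ‖y‖ = 1) (hxy : ⟪x, y⟫_ℝ = 0) (hAxy : ⟪y, A x⟫_ℝ = 0) :
    secondMinMax A ≤ max ⟪x, A x⟫_ℝ ⟪y, A y⟫_ℝ := by
  refine ciSup_le fun v => ?_
  obtain ⟨a, b, hab, hv⟩ := exists_sq_add_sq_eq_one_and_mul_add_mul_eq_zero ⟪x, v⟫_ℝ ⟪y, v⟫_ℝ
  have hχ : ‖a • x + b • y‖ = 1 := by
    have := norm_smul_add_sq (y := b • y) hx (by rw [real_inner_smul_right, hxy, mul_zero]) a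
    rw [norm_smul, hy, Real.norm_eq_abs, mul_one, sq_abs, hab] at this
    exact (pow_eq_one_iff_of_nonneg (norm_nonneg _) two_ne_zero).mp this
  have hχv : ⟪a • x + b • y, v⟫_ℝ = 0 := by
    rw [inner_add_left, real_inner_smul_left, real_inner_smul_left, hv]
  have hbdd : BddBelow (Set.range fun χ : {χ : E // ‖χ‖ = 1 ∧ ⟪χ, v⟫_ℝ = 0} =>
      ⟪(χ : E), A χ⟫_ℝ) :=
    ⟨-‖A‖, by rintro _ ⟨χ, rfl⟩; exact neg_norm_le_inner_map_self A χ.2.1⟩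
  calc _ ≤ ⟪a • x + b • y, A (a • x + b • y)⟫_ℝ := ciInf_le hbdd ⟨_, hχ, hχv⟩
    _ = a ^ 2 * ⟪x, A x⟫_ℝ + b ^ 2 * ⟪y, A y⟫_ℝ := by
      rw [inner_map_self_smul_add hA, map_smul, real_inner_smul_left, real_inner_smul_left,
        real_inner_smul_right, hAxy]
      ring
    _ ≤ (a ^ 2 + b ^ 2) * max ⟪x, A x⟫_ℝ ⟪y, A y⟫_ℝ := by
      linarith [mul_le_mul_of_nonneg_left (le_max_left ⟪x, A x⟫_ℝ ⟪y, A y⟫_ℝ) (sq_nonneg a),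
        mul_le_mul_of_nonneg_left (le_max_right ⟪x, A x⟫_ℝ ⟪y, A y⟫_ℝ) (sq_nonneg b)]
    _ = max ⟪x, A x⟫_ℝ ⟪y, A y⟫_ℝ := by rw [hab, one_mul]

lemma secondMinMax_mul_norm_sq_le {A : E →L[ℝ] E} (hA : (A : E →ₗ[ℝ] E).IsSymmetric)
    {ψ u : E} {E₀ : ℝ} (hψ : ‖ψ‖ = 1) (heig : A ψ = E₀ • ψ) (hgap : E₀ < secondMinMax A)
    (huψ : ⟪u, ψ⟫_ℝ = 0) :
    secondMinMax A * ‖u‖ ^ 2 ≤ ⟪u, A u⟫_ℝ := by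
  rcases eq_or_ne u 0 with rfl | hu
  · simp
  set û : E := ‖u‖⁻¹ • u
  have hû : ‖û‖ = 1 := by
    rw [norm_smul, norm_inv, norm_norm, inv_mul_cancel₀ (norm_ne_zero_iff.mpr hu)]
  have hûψ : ⟪ψ, û⟫_ℝ = 0 := by rw [real_inner_comm, real_inner_smul_left, huψ, mul_zero]
  have hAψû : ⟪û, A ψ⟫_ℝ = 0 := by
    rw [heig, real_inner_smul_right, real_inner_comm, hûψ, mul_zero]
  have hψAψ : ⟪ψ, A ψ⟫_ℝ = E₀ := by
    rw [heig, real_inner_smul_right, real_inner_self_eq_norm_sq, hψ]; ring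
  have := secondMinMax_le_max hA hψ hû hûψ hAψû
  rw [hψAψ, le_max_iff, inner_map_self_inv_norm_smul] at this
  rcases this with h | h
  · exact absurd h (not_le.mpr hgap)
  · exact (le_div_iff₀ (by positivity)).mp h

lemma le_of_mem_spectrum_of_forall_mul_norm_sq_le [CompleteSpace E] {A : E →L[ℝ] E} {c : ℝ}
    (h : ∀ v, c * ‖v‖ ^ 2 ≤ ⟪v, A v⟫_ℝ) {μ : ℝ} (hμ : μ ∈ spectrum ℝ A) : c ≤ μ := by
  by_contra! hμc
  refine spectrum.notMem_iff.mpr ?_ hμ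
  refine ContinuousLinearMap.isUnit_of_forall_le_norm_inner_map _
    (c := (c - μ).toNNReal) (Real.toNNReal_pos.mpr (sub_pos.mpr hμc)) fun x => ?_
  have hx : ⟪(algebraMap ℝ (E →L[ℝ] E) μ - A) x, x⟫_ℝ = μ * ‖x‖ ^ 2 - ⟪x, A x⟫_ℝ := by
    have happ : (algebraMap ℝ (E →L[ℝ] E) μ - A) x = μ • x - A x := by
      simp [Algebra.algebraMap_eq_smul_one]
    rw [happ, inner_sub_left, real_inner_smul_left, real_inner_self_eq_norm_sq, real_inner_comm]
  rw [Real.coe_toNNReal _ (sub_pos.mpr hμc).le, hx, Real.norm_eq_abs]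
  nlinarith [neg_abs_le (μ * ‖x‖ ^ 2 - ⟪x, A x⟫_ℝ), h x]

lemma spectrum_nonempty_of_isSelfAdjoint [CompleteSpace E] [Nontrivial E] {A : E →L[ℝ] E}
    (hA : IsSelfAdjoint A) : (spectrum ℝ A).Nonempty := by
  by_contra h
  have hA0 : A = 0 := by
    have hρ := A.spectralRadius_eq_nnnorm hA
    rw [spectralRadius, Set.not_nonempty_iff_eq_empty.mp h] at hρ
    simpa using hρ.symm
  rw [hA0, spectrum.zero_eq] at h
  exact h (Set.singleton_nonempty 0)

lemma le_sInf_spectrum_of_forall_mul_norm_sq_le [CompleteSpace E] [Nontrivial E]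
    {A : E →L[ℝ] E} (hA : IsSelfAdjoint A) {c : ℝ} (h : ∀ v, c * ‖v‖ ^ 2 ≤ ⟪v, A v⟫_ℝ) :
    c ≤ sInf (spectrum ℝ A) :=
  le_csInf (spectrum_nonempty_of_isSelfAdjoint hA)
    fun _ hμ => le_of_mem_spectrum_of_forall_mul_norm_sq_le h hμ

lemma temple_form_lower_bound {H W : E →L[ℝ] E} (hH : (H : E →ₗ[ℝ] E).IsSymmetric)
    (hW : (W : E →ₗ[ℝ] E).IsSymmetric) (hWpos : ∀ v, 0 ≤ ⟪v, W v⟫_ℝ) {E₀ κ δ : ℝ} {ψ : E}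
    (hψ : ‖ψ‖ = 1) (heig : H ψ = E₀ • ψ)
    (hκ : ⟪W ψ, W ψ⟫_ℝ ≤ κ * ⟪ψ, W ψ⟫_ℝ) (hgap : E₀ + δ ≤ secondMinMax H) (hδ : 0 < δ)
    (hκδ : κ ≤ δ / 2) (φ : E) :
    (E₀ + 1 / 2 * ⟪ψ, W ψ⟫_ℝ) * ‖φ‖ ^ 2 ≤ ⟪φ, (H + W) φ⟫_ℝ := by
  obtain ⟨a, u, hψu, rfl⟩ : ∃ (a : ℝ) (u : E), ⟪ψ, u⟫_ℝ = 0 ∧ φ = a • ψ + u :=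
    ⟨⟪ψ, φ⟫_ℝ, φ - ⟪ψ, φ⟫_ℝ • ψ, by
      rw [inner_sub_right, real_inner_smul_right, real_inner_self_eq_norm_sq, hψ]; ring,
      by abel⟩
  have hWψ : ∀ x, ⟪x, W ψ⟫_ℝ ^ 2 ≤ ‖x‖ ^ 2 * (κ * ⟪ψ, W ψ⟫_ℝ) := fun x => by
    have := real_inner_mul_inner_self_le x (W ψ)
    rw [real_inner_self_eq_norm_sq x] at this
    nlinarith [mul_le_mul_of_nonneg_left hκ (sq_nonneg ‖x‖)]
  have hψHψ : ⟪ψ, H ψ⟫_ℝ = E₀ := by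
    rw [heig, real_inner_smul_right, real_inner_self_eq_norm_sq, hψ]; ring
  have huHψ : ⟪u, H ψ⟫_ℝ = 0 := by
    rw [heig, real_inner_smul_right, real_inner_comm, hψu, mul_zero]
  have hHu : (E₀ + δ) * ‖u‖ ^ 2 ≤ ⟪u, H u⟫_ℝ :=
    (mul_le_mul_of_nonneg_right hgap (sq_nonneg _)).trans
      (secondMinMax_mul_norm_sq_le hH hψ heig (by linarith) (by rwa [real_inner_comm]))
  have hquad := temple_quadratic_bound (a := a) (hWpos ψ) (hWpos u) (sq_nonneg ‖u‖) hδ.le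
    (inner_map_sq_le_of_nonneg hW hWpos u ψ) (hWψ u) (by simpa [hψ] using hWψ ψ) hκδ
  rw [add_apply, inner_add_right, inner_map_self_smul_add hH,
    inner_map_self_smul_add hW, norm_smul_add_sq hψ hψu, hψHψ, huHψ]
  linarith

end InnerProductSpace

theorem temple_ground_state_shift_general {E : Type*} [NormedAddCommGroup E]
    [InnerProductSpace ℝ E] [CompleteSpace E] (H W : E →L[ℝ] E)
    (hH : IsSelfAdjoint H) (hW : IsSelfAdjoint W) (hWpos : ∀ v : E, 0 ≤ ⟪v, W v⟫_ℝ)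
    (E₀ κ δ : ℝ)
    (ψ : E) (hψ : ‖ψ‖ = 1) (heig : H ψ = E₀ • ψ)
    (hκ : ⟪W ψ, W ψ⟫_ℝ ≤ κ * ⟪ψ, W ψ⟫_ℝ)
    (hδ : δ ≤ secondMinMax H - E₀) (hδpos : 0 < δ) (hκδ : κ ≤ δ / 2) :
    sInf (spectrum ℝ (H + W)) ≥ E₀ + (1 / 2) * ⟪ψ, W ψ⟫_ℝ := by
  have : Nontrivial E := ⟨ψ, 0, ne_zero_of_norm_ne_zero (by rw [hψ]; exact one_ne_zero)⟩
  exact le_sInf_spectrum_of_forall_mul_norm_sq_le (hH.add hW) <|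
    temple_form_lower_bound hH.isSymmetric hW.isSymmetric hWpos hψ heig hκ (by linarith) hδpos
      hκδ

/-- If `ψ` is a normalized ground state of `H` with `Hψ = E₀ψ`, `E₀ = inf σ(H)`,
`W ≥ 0` is bounded self-adjoint with `⟨Wψ,Wψ⟩ ≤ κ⟨ψ,Wψ⟩`, the spectral gap satisfies
`E₁(H) - E₀ ≥ δ > 0` and `κ ≤ δ/2`, then `E₀(H+W) ≥ E₀ + (1/2)⟨ψ,Wψ⟩`. -/
theorem temple_ground_state_shift {E : Type*} [NormedAddCommGroup E]
    [InnerProductSpace ℝ E] [CompleteSpace E] (H W : E →L[ℝ] E)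
    (hH : IsSelfAdjoint H) (hW : IsSelfAdjoint W) (hWpos : ∀ v : E, 0 ≤ ⟪v, W v⟫_ℝ)
    (E₀ κ δ : ℝ) (hE₀ : E₀ = sInf (spectrum ℝ H))
    (ψ : E) (hψ : ‖ψ‖ = 1) (heig : H ψ = E₀ • ψ)
    (hκ : ⟪W ψ, W ψ⟫_ℝ ≤ κ * ⟪ψ, W ψ⟫_ℝ)
    (hδ : δ ≤ secondMinMax H - E₀) (hδpos : 0 < δ) (hκδ : κ ≤ δ / 2) :
    sInf (spectrum ℝ (H + W)) ≥ E₀ + (1 / 2) * ⟪ψ, W ψ⟫_ℝ :=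
  temple_ground_state_shift_general H W hH hW hWpos E₀ κ δ ψ hψ heig hκ hδ hδpos hκδ
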